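/- arXiv:2201.04222 — 3 statements merged into one kernel-verified Lean document; each statement's English description precedes it below -/
import Mathlib

section
/- Let f, g : ℝ → ℝ be C¹ with g(x₀) = 0, g'(x₀) ≠ 0 and f(x₀) ≠ 0, and suppose λ := g'(x₀)/f(x₀) < 0. Then x₀ is an incoming singularity: there exists a neighborhood U of x₀ such that every solution of g(x)ẋ = f(x) (i.e., of ẋ = f(x)/g(x) for x ≠ x₀) with initial condition in U \ {x₀} reaches x₀ in finite forward time. -/
/-!
Near `x₀` the field `F = f / g` behaves like `λ⁻¹ / (x - x₀)`, so `(x - x₀) F(x)` is bounded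
above by a negative constant on a punctured neighbourhood. Along a solution, `(x(t) - x₀)²` then
decreases at least linearly in time, which keeps the solution in the neighbourhood and forces it
to reach `x₀` in finite time.
-/

open Filter Topology Set Metric

theorem tendsto_sub_mul_div_of_hasDerivAt {f g : ℝ → ℝ} {x₀ g' : ℝ} (hf : ContinuousAt f x₀)
    (hg : HasDerivAt g g' x₀) (hg0 : g x₀ = 0) (hg' : g' ≠ 0) :
    Tendsto (fun z => (z - x₀) * (f z / g z)) (𝓝[≠] x₀) (𝓝 (f x₀ / g')) := by
  refine ((hf.mono_left nhdsWithin_le_nhds).div (hasDerivAt_iff_tendsto_slope.mp hg) hg').congr' ?_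
  filter_upwards [self_mem_nhdsWithin] with z hz
  rw [Pi.div_apply, slope_def_field, hg0, sub_zero, div_div_eq_mul_div]
  ring

section Arrival

variable {F x : ℝ → ℝ} {x₀ δ L : ℝ}

theorem sq_sub_le_of_sub_mul_le (hL : L < 0)
    (hF : ∀ z ∈ ball x₀ δ, z ≠ x₀ → (z - x₀) * F z ≤ L) (hx0 : x 0 ∈ ball x₀ δ)
    (hx : ∀ t ≥ 0, HasDerivAt x (F (x t)) t) (hne : ∀ t ≥ 0, x t ≠ x₀) {t : ℝ} (ht : 0 ≤ t) :
    (x t - x₀) ^ 2 ≤ (x 0 - x₀) ^ 2 + L * t := by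
  have hV : ∀ s ≥ 0, HasDerivAt (fun s => (x s - x₀) ^ 2) (2 * (x s - x₀) * F (x s)) s := by
    intro s hs
    exact (((hx s hs).sub_const x₀).fun_pow 2).congr_deriv (by push_cast; ring)
  have hB : ∀ s, HasDerivAt (fun s => (x 0 - x₀) ^ 2 + L * s) L s := fun s => by
    simpa using ((hasDerivAt_id s).const_mul L).const_add ((x 0 - x₀) ^ 2)
  refine image_le_of_deriv_right_lt_deriv_boundary (B' := fun _ => L)
    (fun s hs => (hV s hs.1).continuousAt.continuousWithinAt)
    (fun s hs => (hV s hs.1).hasDerivWithinAt) (by simp) hB ?_ ⟨ht, le_rfl⟩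
  intro s hs hVB
  -- The fence only has to be checked where `(x s - x₀)²` touches the barrier, and there
  -- `(x s - x₀)² ≤ (x 0 - x₀)² < δ²`: the solution cannot have left the ball yet.
  have hxs : x s ∈ ball x₀ δ := by
    rw [mem_ball, Real.dist_eq] at hx0 ⊢
    refine abs_lt_of_sq_lt_sq ?_ ((abs_nonneg _).trans hx0.le)
    have h0 : (x 0 - x₀) ^ 2 < δ ^ 2 := by
      simpa only [sq_abs] using pow_lt_pow_left₀ hx0 (abs_nonneg _) two_ne_zero
    nlinarith [mul_nonpos_of_nonpos_of_nonneg hL.le hs.1]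
  linarith [hF _ hxs (hne s hs.1)]

theorem exists_pos_eq_of_sub_mul_le (hL : L < 0)
    (hF : ∀ z ∈ ball x₀ δ, z ≠ x₀ → (z - x₀) * F z ≤ L) (hx0 : x 0 ∈ ball x₀ δ)
    (hx0' : x 0 ≠ x₀) (hx : ∀ t ≥ 0, x t ≠ x₀ → HasDerivAt x (F (x t)) t) :
    ∃ T > 0, x T = x₀ := by
  by_contra! hT
  have hne : ∀ t ≥ 0, x t ≠ x₀ := fun t ht =>
    ht.eq_or_lt.elim (fun h => h ▸ hx0') (hT t)
  set T := -((x 0 - x₀) ^ 2 + 1) / L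
  have hT0 : 0 ≤ T := div_nonneg_of_nonpos (by nlinarith) hL.le
  have hdecay := sq_sub_le_of_sub_mul_le hL hF hx0 (fun t ht => hx t ht (hne t ht)) hne hT0
  rw [mul_div_cancel₀ _ hL.ne] at hdecay
  nlinarith [sq_nonneg (x T - x₀)]

end Arrival

theorem simple_singularity_incoming_general
    (f g : ℝ → ℝ) (hf : ContDiff ℝ 1 f) (hg : ContDiff ℝ 1 g)
    (x₀ : ℝ) (hg0 : g x₀ = 0) (hg' : deriv g x₀ ≠ 0)
    (hlam : deriv g x₀ / f x₀ < 0) :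
    ∃ U ∈ nhds x₀, ∀ a ∈ U \ {x₀}, ∀ x : ℝ → ℝ,
      Continuous x → x 0 = a →
      (∀ t ≥ (0:ℝ), x t ≠ x₀ → HasDerivAt x (f (x t) / g (x t)) t) →
      ∃ T > (0:ℝ), x T = x₀ := by
  have hL : f x₀ / deriv g x₀ < 0 := by
    rw [← inv_div]
    exact inv_lt_zero.mpr hlam
  have hlim := tendsto_sub_mul_div_of_hasDerivAt hf.continuous.continuousAt
    ((hg.differentiable one_ne_zero x₀).hasDerivAt) hg0 hg'
  obtain ⟨δ, hδ, hball⟩ := mem_nhdsWithin_iff.mp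
    (hlim.eventually_lt_const (by linarith : f x₀ / deriv g x₀ < f x₀ / deriv g x₀ / 2))
  refine ⟨ball x₀ δ, ball_mem_nhds x₀ hδ, ?_⟩
  rintro _ ⟨ha, ha'⟩ x - rfl hx
  exact exists_pos_eq_of_sub_mul_le (by linarith)
    (fun z hz hne => (hball ⟨hz, hne⟩).le) ha ha' hx

/-- If `g(x₀) = 0`, `g'(x₀) ≠ 0`, `f(x₀) ≠ 0` and `λ = g'(x₀)/f(x₀) < 0`, then `x₀` is
an incoming singularity of `g(x)ẋ = f(x)`: every forward solution of `ẋ = f(x)/g(x)`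
starting near `x₀` reaches `x₀` in finite forward time. -/
theorem simple_singularity_incoming
    (f g : ℝ → ℝ) (hf : ContDiff ℝ 1 f) (hg : ContDiff ℝ 1 g)
    (x₀ : ℝ) (hg0 : g x₀ = 0) (hg' : deriv g x₀ ≠ 0) (hf0 : f x₀ ≠ 0)
    (hlam : deriv g x₀ / f x₀ < 0) :
    ∃ U ∈ nhds x₀, ∀ a ∈ U \ {x₀}, ∀ x : ℝ → ℝ,
      Continuous x → x 0 = a →
      (∀ t ≥ (0:ℝ), x t ≠ x₀ → HasDerivAt x (f (x t) / g (x t)) t) →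
      ∃ T > (0:ℝ), x T = x₀ :=
  simple_singularity_incoming_general f g hf hg x₀ hg0 hg' hlam
end

section
/- Let m ≥ 1 and let s = ±1. For any integers a₁,...,a_k ≥ 1 with A := Σaᵢ ≤ m + 1 and A ≡ m + 1 (mod 2), and any ε > 0, there exist real numbers x₁ < ... < x_k in (−ε, ε) and a polynomial Q(y) = s·(y−x₁)^{a₁}···(y−x_k)^{a_k}·R(y), where R is a monic (up to sign matching s) polynomial of degree m+1−A with no real roots, such that s·Q is within distance O(ε) of s·y^{m+1} in the coefficients of degree ≤ m, and the zero set of Q in ℝ is exactly {x₁,...,x_k} with multiplicities a₁,...,a_k. In particular the right-hand side y^{m+1} of the normal form ẏ = s·y^{m+1} admits a small perturbation with exactly k equilibria of prescribed multiplicities. -/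
/-!
Place the prescribed roots `xᵢ` in `[0, δ)` with `δ = min ε 1`, and fill the remaining degree
`m + 1 - A`, which is even by the parity condition, with `(y² + δ²)ⁿ`; this factor is monic and has
no real roots, so the real roots of `Q` are exactly the `xᵢ` with multiplicities `aᵢ`.
For the coefficient estimate, the absolute values of the coefficients of a product are bounded by
the coefficients of the product of coefficientwise majorants. Since `y - xᵢ` is majorized by `y + δ`
and `y² + δ²` by `(y + δ)²`, the coefficients of `Q / s` are bounded by those of `(y + δ)^(m+1)`,
which are at most `2^(m+1) δ` below the leading one.
-/

open Polynomial

namespace Polynomial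

section AbsCoeffLE

variable {R : Type*} [CommRing R] [LinearOrder R] [IsStrictOrderedRing R]

def AbsCoeffLE (p P : R[X]) : Prop := ∀ j, |p.coeff j| ≤ P.coeff j

theorem absCoeffLE_one : AbsCoeffLE (1 : R[X]) 1 := fun j => by
  rw [coeff_one]; split_ifs <;> simp

theorem AbsCoeffLE.mul {p q P Q : R[X]} (hp : AbsCoeffLE p P) (hq : AbsCoeffLE q Q) :
    AbsCoeffLE (p * q) (P * Q) := fun j => by
  rw [coeff_mul, coeff_mul]
  refine (Finset.abs_sum_le_sum_abs _ _).trans (Finset.sum_le_sum fun ij _ => ?_)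
  rw [abs_mul]
  exact mul_le_mul (hp ij.1) (hq ij.2) (abs_nonneg _) ((abs_nonneg _).trans (hp ij.1))

theorem AbsCoeffLE.pow {p P : R[X]} (hp : AbsCoeffLE p P) (n : ℕ) :
    AbsCoeffLE (p ^ n) (P ^ n) := by
  induction n with
  | zero => simpa using absCoeffLE_one
  | succ n ih => simpa only [pow_succ] using ih.mul hp

theorem AbsCoeffLE.prod {ι : Type*} {s : Finset ι} {p P : ι → R[X]}
    (h : ∀ i ∈ s, AbsCoeffLE (p i) (P i)) : AbsCoeffLE (∏ i ∈ s, p i) (∏ i ∈ s, P i) := by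
  classical
  induction s using Finset.induction_on with
  | empty => simpa using absCoeffLE_one
  | insert i s hi ih =>
    rw [Finset.prod_insert hi, Finset.prod_insert hi]
    exact (h i (Finset.mem_insert_self i s)).mul
      (ih fun j hj => h j (Finset.mem_insert_of_mem hj))

theorem absCoeffLE_X_sub_C {c δ : R} (hc : |c| ≤ δ) : AbsCoeffLE (X - C c) (X + C δ) := by
  intro j
  rcases j with _ | _ | j <;> simp [coeff_X, coeff_C, hc]

theorem absCoeffLE_X_sq_add_C_sq {δ : R} (hδ : 0 ≤ δ) :
    AbsCoeffLE (X ^ 2 + C (δ ^ 2)) ((X + C δ) ^ 2) := by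
  intro j
  rw [coeff_X_add_C_pow, coeff_add, coeff_X_pow, coeff_C]
  rcases j with _ | _ | _ | j <;> simp [hδ]

theorem coeff_X_add_C_pow_le {δ : R} (hδ₀ : 0 ≤ δ) (hδ₁ : δ ≤ 1) {n j : ℕ} (hj : j < n) :
    ((X + C δ) ^ n).coeff j ≤ 2 ^ n * δ := by
  rw [coeff_X_add_C_pow, mul_comm]
  gcongr
  · exact_mod_cast Nat.choose_le_two_pow n j
  · exact pow_le_of_le_one hδ₀ hδ₁ (by omega)

end AbsCoeffLE

section Roots

variable {R : Type*} [CommRing R] [IsDomain R]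

theorem rootMultiplicity_prod_X_sub_C_pow {ι : Type*} [Fintype ι]
    {x : ι → R} (hx : Function.Injective x) (a : ι → ℕ) (i : ι) :
    rootMultiplicity (x i) (∏ j, (X - C (x j)) ^ a j) = a i := by
  classical
  rw [← count_roots, roots_prod _ _ (Finset.prod_ne_zero_iff.mpr fun j _ =>
    pow_ne_zero _ (X_sub_C_ne_zero _))]
  simp [Multiset.count_bind, Multiset.count_singleton, hx.eq_iff]

theorem eval_prod_X_sub_C_pow_eq_zero_iff {ι : Type*} [Fintype ι]
    {x : ι → R} {a : ι → ℕ} (ha : ∀ i, a i ≠ 0) (r : R) :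
    (∏ j, (X - C (x j)) ^ a j).eval r = 0 ↔ ∃ i, r = x i := by
  simp [eval_prod, Finset.prod_eq_zero_iff, ha, sub_eq_zero]

theorem rootMultiplicity_C_mul_mul_of_eval_ne_zero {s : R} (hs : s ≠ 0)
    {p q : R[X]} (hp : p ≠ 0) (hq : ∀ r, q.eval r ≠ 0) (x : R) :
    rootMultiplicity x (C s * p * q) = rootMultiplicity x p := by
  have hq0 : q ≠ 0 := fun h => hq 0 (by simp [h])
  rw [rootMultiplicity_mul (by simp [hs, hp, hq0]), rootMultiplicity_mul (by simp [hs, hp]),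
    rootMultiplicity_C, rootMultiplicity_eq_zero (hq x), zero_add, add_zero]

end Roots

end Polynomial

theorem exists_strictMono_fin_mem_Ico {K : Type*} [Field K] [LinearOrder K]
    [IsStrictOrderedRing K] (k : ℕ) {δ : K} (hδ : 0 < δ) :
    ∃ x : Fin k → K, StrictMono x ∧ ∀ i, x i ∈ Set.Ico 0 δ := by
  refine ⟨fun i => i * δ / (k + 1), fun i j hij => ?_, fun i => ⟨by positivity, ?_⟩⟩
  · dsimp only
    gcongr
    exact_mod_cast hij
  · rw [div_lt_iff₀ (by positivity), mul_comm]
    gcongr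
    exact_mod_cast i.2.trans (Nat.lt_succ_self k)

theorem codim_m_equilibrium_realization_general
    (m : ℕ) (s : ℝ) (hs : s = 1 ∨ s = -1)
    {k : ℕ} (a : Fin k → ℕ) (ha : ∀ i, 1 ≤ a i)
    (A : ℕ) (hA : A = ∑ i, a i) (hAle : A ≤ m + 1)
    (hpar : A % 2 = (m + 1) % 2) :
    ∃ K > (0:ℝ), ∀ ε > (0:ℝ), ∃ x : Fin k → ℝ,
      StrictMono x ∧ (∀ i, x i ∈ Set.Ioo (-ε) ε) ∧
      ∃ R : Polynomial ℝ, R.Monic ∧ R.natDegree = m + 1 - A ∧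
        (∀ r : ℝ, R.eval r ≠ 0) ∧
        (∀ j ≤ m,
          |(C s * (∏ i, (X - C (x i)) ^ a i) * R).coeff j -
            (C s * X ^ (m + 1) : Polynomial ℝ).coeff j| ≤ K * ε) ∧
        (∀ r : ℝ, (C s * (∏ i, (X - C (x i)) ^ a i) * R).eval r = 0 ↔
          ∃ i, r = x i) ∧
        (∀ i, (C s * (∏ i, (X - C (x i)) ^ a i) * R).rootMultiplicity (x i)
          = a i) := by
  have hs0 : s ≠ 0 := by rcases hs with rfl | rfl <;> norm_num
  have habs : |s| = 1 := by rcases hs with rfl | rfl <;> norm_num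
  refine ⟨2 ^ (m + 1), by positivity, fun ε hε => ?_⟩
  set δ := min ε 1
  have hδ : 0 < δ := lt_min hε one_pos
  obtain ⟨x, hx, hxδ⟩ := exists_strictMono_fin_mem_Ico k hδ
  obtain ⟨n, hn⟩ : ∃ n, A + 2 * n = m + 1 := ⟨(m + 1 - A) / 2, by omega⟩
  set P := ∏ i, (X - C (x i)) ^ a i
  set R := (X ^ 2 + C (δ ^ 2)) ^ n
  have hR : ∀ r, R.eval r ≠ 0 := fun r => by
    simp only [R, eval_pow, eval_add, eval_X, eval_C]; positivity
  have hmaj : AbsCoeffLE (P * R) ((X + C δ) ^ (m + 1)) := by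
    rw [← hn, pow_add, pow_mul, hA, ← Finset.prod_pow_eq_pow_sum]
    refine (AbsCoeffLE.prod fun i _ => (absCoeffLE_X_sub_C ?_).pow _).mul
      ((absCoeffLE_X_sq_add_C_sq hδ.le).pow n)
    rw [abs_of_nonneg (hxδ i).1]
    exact (hxδ i).2.le
  have hP0 : P ≠ 0 := Finset.prod_ne_zero_iff.mpr fun i _ => pow_ne_zero _ (X_sub_C_ne_zero _)
  refine ⟨x, hx, fun i => ⟨by linarith [(hxδ i).1], (hxδ i).2.trans_le (min_le_left _ _)⟩,
    R, (monic_X_pow_add_C _ two_ne_zero).pow n, ?_, hR, fun j hj => ?_, fun r => ?_, fun i => ?_⟩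
  · rw [natDegree_pow, natDegree_X_pow_add_C]; omega
  · rw [mul_assoc, coeff_C_mul, coeff_C_mul, coeff_X_pow, if_neg (by omega), mul_zero, sub_zero,
      abs_mul, habs, one_mul]
    calc |(P * R).coeff j| ≤ ((X + C δ) ^ (m + 1)).coeff j := hmaj j
      _ ≤ 2 ^ (m + 1) * δ := coeff_X_add_C_pow_le hδ.le (min_le_right _ _) (by omega)
      _ ≤ 2 ^ (m + 1) * ε := by gcongr; exact min_le_left _ _
  · rw [← eval_prod_X_sub_C_pow_eq_zero_iff (fun i => Nat.one_le_iff_ne_zero.mp (ha i)) r]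
    simp [hs0, hR r]
  · rw [rootMultiplicity_C_mul_mul_of_eval_ne_zero hs0 hP0 hR,
      rootMultiplicity_prod_X_sub_C_pow hx.injective]

/-- Case A1.m: any admissible configuration of equilibria (multiplicities `aᵢ`
summing to `A ≤ m+1` with `A ≡ m+1 (mod 2)`) is realized by a small perturbation
`Q = s·∏(y−xᵢ)^{aᵢ}·R` of `s·y^{m+1}`, with `R` monic without real roots and the
low-order coefficients within `O(ε)` of those of `s·y^{m+1}`. -/
theorem codim_m_equilibrium_realization
    (m : ℕ) (hm : 1 ≤ m) (s : ℝ) (hs : s = 1 ∨ s = -1)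
    {k : ℕ} (a : Fin k → ℕ) (ha : ∀ i, 1 ≤ a i)
    (A : ℕ) (hA : A = ∑ i, a i) (hAle : A ≤ m + 1)
    (hpar : A % 2 = (m + 1) % 2) :
    ∃ K > (0:ℝ), ∀ ε > (0:ℝ), ∃ x : Fin k → ℝ,
      StrictMono x ∧ (∀ i, x i ∈ Set.Ioo (-ε) ε) ∧
      ∃ R : Polynomial ℝ, R.Monic ∧ R.natDegree = m + 1 - A ∧
        (∀ r : ℝ, R.eval r ≠ 0) ∧
        (∀ j ≤ m,
          |(C s * (∏ i, (X - C (x i)) ^ a i) * R).coeff j -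
            (C s * X ^ (m + 1) : Polynomial ℝ).coeff j| ≤ K * ε) ∧
        (∀ r : ℝ, (C s * (∏ i, (X - C (x i)) ^ a i) * R).eval r = 0 ↔
          ∃ i, r = x i) ∧
        (∀ i, (C s * (∏ i, (X - C (x i)) ^ a i) * R).rootMultiplicity (x i)
          = a i) :=
  codim_m_equilibrium_realization_general m s hs a ha A hA hAle hpar
end

section
/- Let f, g : ℝ × ℝ → ℝ be smooth with g(0,0) = 0, ∂g/∂x(0,0) = 0, ∂²g/∂x²(0,0) = 2a ≠ 0, f(0,0) ≠ 0, and ∂g/∂α(0,0) ≠ 0. Write g̃ = g/f (defined near the origin since f ≠ 0), and expand g̃(x,α) = g₀(α) + g₁(α)x + g₂(α)x² + O(x³) with g₀(0) = g₁(0) = 0, g₂(0) = ã ≠ 0. Then there exists a smooth function δ(α) with δ(0) = 0 and δ'(0) = −g₁'(0)/(2ã) such that, after the shift x = y + δ(α), the coefficient of y in the Taylor expansion of g̃(y + δ(α), α) vanishes identically in α (to the order of the expansion): g̃(y + δ(α), α) = c₀(α) + c₂(α)y² + O(y³) with c₂(0) = ã and c₀'(0) = g₀'(0) ≠ 0. 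-/
open Filter Topology

/-- Normalization step for the non-simple singularity (case A2.1): a
parameter-dependent shift `x = y + δ(α)` with `δ(0) = 0`,
`δ'(0) = −g₁'(0)/(2ã)` kills the linear term of `g̃ = g/f` in `y`, leaving
`g̃ = c₀(α) + c₂(α)y² + O(y³)` with `c₂(0) = ã` and `c₀'(0) = g₀'(0) ≠ 0`. -/
theorem nonsimple_singularity_normalization
    (f g : ℝ → ℝ → ℝ)
    (hf : ContDiff ℝ (⊤ : ℕ∞) (fun p : ℝ × ℝ => f p.1 p.2))
    (hgs : ContDiff ℝ (⊤ : ℕ∞) (fun p : ℝ × ℝ => g p.1 p.2))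
    (hg0 : g 0 0 = 0) (hgx : deriv (fun x => g x 0) 0 = 0)
    (a : ℝ) (hgxx : deriv (fun x => deriv (fun x' => g x' 0) x) 0 = 2 * a)
    (ha : a ≠ 0) (hf0 : f 0 0 ≠ 0)
    (hga : deriv (fun α => g 0 α) 0 ≠ 0)
    (gt : ℝ → ℝ → ℝ) (hgt : ∀ x α : ℝ, gt x α = g x α / f x α)
    (g₀ g₁ g₂ : ℝ → ℝ)
    (hg₀ : ∀ α : ℝ, g₀ α = gt 0 α)
    (hg₁ : ∀ α : ℝ, g₁ α = deriv (fun x => gt x α) 0)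
    (hg₂ : ∀ α : ℝ, g₂ α = (1 / 2) * deriv (fun x => deriv (fun x' => gt x' α) x) 0)
    (atil : ℝ) (hatil : atil = g₂ 0) (hatil0 : atil ≠ 0) :
    ∃ ε > (0:ℝ), ∃ δ : ℝ → ℝ,
      ContDiffOn ℝ (⊤ : ℕ∞) δ (Set.Ioo (-ε) ε) ∧ δ 0 = 0 ∧
      deriv δ 0 = -(deriv g₁ 0) / (2 * atil) ∧
      (∀ α ∈ Set.Ioo (-ε) ε, deriv (fun y => gt (y + δ α) α) 0 = 0) ∧
      deriv (fun α => gt (δ α) α) 0 = deriv g₀ 0 ∧ deriv g₀ 0 ≠ 0 ∧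
      (1 / 2) * deriv (fun y => deriv (fun y' => gt (y' + δ 0) 0) y) 0 = atil := by
  -- the open set where `f ≠ 0`
  set S : Set (ℝ × ℝ) := {p | f p.1 p.2 ≠ 0} with hSdef
  have hSopen : IsOpen S := isOpen_ne.preimage hf.continuous
  have hS0 : ((0:ℝ),(0:ℝ)) ∈ S := hf0
  set G : ℝ × ℝ → ℝ := fun p => gt p.1 p.2 with hGdef
  have hGon : ContDiffOn ℝ (⊤ : ℕ∞) G S := by
    have : ContDiffOn ℝ (⊤ : ℕ∞) (fun p : ℝ × ℝ => g p.1 p.2 / f p.1 p.2) S :=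
      (hgs.contDiffOn).div (hf.contDiffOn) (fun p hp => hp)
    exact this.congr (fun p _ => by simp [hGdef, hgt])
  have hGdiff : ∀ p ∈ S, DifferentiableAt ℝ G p := fun p hp =>
    (hGon.contDiffAt (hSopen.mem_nhds hp)).differentiableAt (by simp)
  -- the partial derivative of `gt` in the first variable
  have keyx : ∀ p : ℝ × ℝ, p ∈ S →
      HasDerivAt (fun x => gt x p.2) (fderiv ℝ G p ((1:ℝ),(0:ℝ))) p.1 := by
    intro p hp
    have h1 : HasDerivAt (fun x : ℝ => (x, p.2)) ((1:ℝ),(0:ℝ)) p.1 :=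
      (hasDerivAt_id p.1).prodMk (hasDerivAt_const p.1 p.2)
    exact (hGdiff p hp).hasFDerivAt.comp_hasDerivAt p.1 h1
  set F : ℝ × ℝ → ℝ := fun p => fderiv ℝ G p ((1:ℝ),(0:ℝ)) with hFdef
  have hFon : ContDiffOn ℝ (⊤ : ℕ∞) F S := by
    have h1 : ContDiffOn ℝ (⊤ : ℕ∞) (fderiv ℝ G) S := hGon.fderiv_of_isOpen hSopen (by simp)
    exact (ContinuousLinearMap.apply ℝ ℝ ((1:ℝ),(0:ℝ))).contDiff.comp_contDiffOn h1
  have hFat : ContDiffAt ℝ (⊤ : ℕ∞) F ((0:ℝ),(0:ℝ)) := hFon.contDiffAt (hSopen.mem_nhds hS0)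
  have hFdiff : DifferentiableAt ℝ F ((0:ℝ),(0:ℝ)) := hFat.differentiableAt (by simp)
  set A : ℝ := fderiv ℝ F ((0:ℝ),(0:ℝ)) ((1:ℝ),(0:ℝ)) with hAdef
  set B : ℝ := fderiv ℝ F ((0:ℝ),(0:ℝ)) ((0:ℝ),(1:ℝ)) with hBdef
  have hLdec : ∀ q : ℝ × ℝ, fderiv ℝ F ((0:ℝ),(0:ℝ)) q = q.1 * A + q.2 * B := by
    intro q
    have h : q = q.1 • ((1:ℝ),(0:ℝ)) + q.2 • ((0:ℝ),(1:ℝ)) := by simp [Prod.ext_iff]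
    rw [h, map_add, map_smul, map_smul, smul_eq_mul, smul_eq_mul]
    simp [hAdef, hBdef]
  -- eventual membership along the axes
  have hmemx : ∀ᶠ x : ℝ in 𝓝 0, ((x, (0:ℝ)) : ℝ × ℝ) ∈ S := by
    have hc : ContinuousAt (fun x : ℝ => ((x, (0:ℝ)) : ℝ × ℝ)) 0 :=
      (continuous_id.prodMk continuous_const).continuousAt
    exact hc.eventually_mem (hSopen.mem_nhds hS0)
  have hmemy : ∀ᶠ α : ℝ in 𝓝 0, (((0:ℝ), α) : ℝ × ℝ) ∈ S := by
    have hc : ContinuousAt (fun α : ℝ => (((0:ℝ), α) : ℝ × ℝ)) 0 :=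
      (continuous_const.prodMk continuous_id).continuousAt
    exact hc.eventually_mem (hSopen.mem_nhds hS0)
  -- A = 2 * atil
  have hdFx : HasDerivAt (fun x : ℝ => F (x, 0)) A 0 := by
    rw [hAdef]
    have hc : HasDerivAt (fun x : ℝ => ((x, (0:ℝ)) : ℝ × ℝ)) (((1:ℝ),(0:ℝ)) : ℝ × ℝ) 0 :=
      (hasDerivAt_id (0:ℝ)).prodMk (hasDerivAt_const (0:ℝ) (0:ℝ))
    exact HasFDerivAt.comp_hasDerivAt (f := fun x : ℝ => ((x,(0:ℝ)) : ℝ × ℝ)) 0 hFdiff.hasFDerivAt hc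
  have hev1 : (fun x : ℝ => deriv (fun x' => gt x' 0) x) =ᶠ[𝓝 0] fun x => F (x, 0) :=
    hmemx.mono fun x hx => (keyx (x, 0) hx).deriv
  have hA2 : A = 2 * atil := by
    have h1 : deriv (fun x : ℝ => deriv (fun x' => gt x' 0) x) 0 = A :=
      hev1.deriv_eq.trans hdFx.deriv
    have h2 := hg₂ 0
    rw [h1] at h2
    rw [hatil, h2]; ring
  have hA0 : A ≠ 0 := by rw [hA2]; exact mul_ne_zero two_ne_zero hatil0
  -- F (0,0) = 0
  have hdg1 : DifferentiableAt ℝ (fun x => g x 0) 0 :=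
    ((hgs.differentiable (by simp)).comp
      ((differentiable_id).prodMk (differentiable_const (0:ℝ)))).differentiableAt
  have hdf1 : DifferentiableAt ℝ (fun x => f x 0) 0 :=
    ((hf.differentiable (by simp)).comp
      ((differentiable_id).prodMk (differentiable_const (0:ℝ)))).differentiableAt
  have hg₁0 : g₁ 0 = 0 := by
    rw [hg₁]
    have heq : (fun x => gt x 0) = fun x => g x 0 / f x 0 := funext fun x => hgt x 0
    rw [heq, deriv_fun_div hdg1 hdf1 hf0, hgx, hg0]
    ring
  have hF00 : F ((0:ℝ),(0:ℝ)) = 0 := by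
    have h := (keyx ((0:ℝ),(0:ℝ)) hS0).deriv
    show fderiv ℝ G ((0:ℝ),(0:ℝ)) ((1:ℝ),(0:ℝ)) = 0
    rw [← h, ← hg₁ 0, hg₁0]
  -- deriv g₁ 0 = B
  have hdFy : HasDerivAt (fun α : ℝ => F (0, α)) B 0 := by
    rw [hBdef]
    have hc : HasDerivAt (fun α : ℝ => (((0:ℝ), α) : ℝ × ℝ)) (((0:ℝ),(1:ℝ)) : ℝ × ℝ) 0 :=
      (hasDerivAt_const (0:ℝ) (0:ℝ)).prodMk (hasDerivAt_id (0:ℝ))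
    exact HasFDerivAt.comp_hasDerivAt (f := fun α : ℝ => (((0:ℝ),α) : ℝ × ℝ)) 0 hFdiff.hasFDerivAt hc
  have hevg₁ : g₁ =ᶠ[𝓝 0] fun α => F (0, α) :=
    hmemy.mono fun α hα => by rw [hg₁ α]; exact (keyx (0, α) hα).deriv
  have hg₁B : deriv g₁ 0 = B := hevg₁.deriv_eq.trans hdFy.deriv
  -- the map Φ and its invertible derivative
  set L : ℝ × ℝ →L[ℝ] ℝ × ℝ :=
    (fderiv ℝ F ((0:ℝ),(0:ℝ))).prod (ContinuousLinearMap.snd ℝ ℝ ℝ) with hLdef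
  set M : ℝ × ℝ →L[ℝ] ℝ × ℝ :=
    (A⁻¹ • (ContinuousLinearMap.fst ℝ ℝ ℝ - B • ContinuousLinearMap.snd ℝ ℝ ℝ)).prod
      (ContinuousLinearMap.snd ℝ ℝ ℝ) with hMdef
  have h1 : ∀ p : ℝ × ℝ, M (L p) = p := by
    intro p
    simp only [hLdef, hMdef, ContinuousLinearMap.prod_apply, ContinuousLinearMap.smul_apply,
      ContinuousLinearMap.sub_apply, ContinuousLinearMap.coe_fst', ContinuousLinearMap.coe_snd',
      hLdec, smul_eq_mul, Prod.ext_iff]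
    constructor
    · field_simp; ring
    · trivial
  have h2 : ∀ p : ℝ × ℝ, L (M p) = p := by
    intro p
    simp only [hLdef, hMdef, ContinuousLinearMap.prod_apply, ContinuousLinearMap.smul_apply,
      ContinuousLinearMap.sub_apply, ContinuousLinearMap.coe_fst', ContinuousLinearMap.coe_snd',
      hLdec, smul_eq_mul, Prod.ext_iff]
    constructor
    · field_simp; ring
    · trivial
  set e : (ℝ × ℝ) ≃L[ℝ] (ℝ × ℝ) := ContinuousLinearEquiv.equivOfInverse L M h1 h2 with hedef
  have hcoe : (e : (ℝ × ℝ) →L[ℝ] (ℝ × ℝ)) = L := rfl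
  set Φ : ℝ × ℝ → ℝ × ℝ := fun p => (F p, p.2) with hΦdef
  have hΦ' : HasFDerivAt Φ (e : (ℝ × ℝ) →L[ℝ] (ℝ × ℝ)) ((0:ℝ),(0:ℝ)) := by
    rw [hcoe]
    exact hFdiff.hasFDerivAt.prodMk ((ContinuousLinearMap.snd ℝ ℝ ℝ).hasFDerivAt)
  have hΦat : ContDiffAt ℝ (⊤ : ℕ∞) Φ ((0:ℝ),(0:ℝ)) := hFat.prodMk contDiff_snd.contDiffAt
  have hone : ((⊤ : ℕ∞) : WithTop ℕ∞) ≠ 0 := by simp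
  have hstrict := hΦat.hasStrictFDerivAt' hΦ' hone
  set Ψ : ℝ × ℝ → ℝ × ℝ := hstrict.localInverse Φ e ((0:ℝ),(0:ℝ)) with hΨdef
  have hΦ00 : Φ ((0:ℝ),(0:ℝ)) = ((0:ℝ),(0:ℝ)) := by
    show (F ((0:ℝ),(0:ℝ)), (((0:ℝ),(0:ℝ)) : ℝ × ℝ).2) = ((0:ℝ),(0:ℝ))
    rw [hF00]
  have hΨ00 : Ψ ((0:ℝ),(0:ℝ)) = ((0:ℝ),(0:ℝ)) := by
    have := hstrict.localInverse_apply_image; rwa [hΦ00] at this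
  have hri : ∀ᶠ y in 𝓝 (((0:ℝ),(0:ℝ)) : ℝ × ℝ), Φ (Ψ y) = y := by
    have := hstrict.eventually_right_inverse; rwa [hΦ00] at this
  have hΨat : ContDiffAt ℝ (⊤ : ℕ∞) Ψ ((0:ℝ),(0:ℝ)) := by
    have : ContDiffAt ℝ (⊤ : ℕ∞) Ψ (Φ ((0:ℝ),(0:ℝ))) := hΦat.to_localInverse hΦ' hone
    rwa [hΦ00] at this
  have hΨct : ContinuousAt Ψ ((0:ℝ),(0:ℝ)) := by
    have := hstrict.localInverse_continuousAt; rwa [hΦ00] at this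
  -- the shift δ
  set δ : ℝ → ℝ := fun α => (Ψ ((0:ℝ), α)).1 with hδdef
  have hcur : ContinuousAt (fun α : ℝ => (((0:ℝ), α) : ℝ × ℝ)) 0 :=
    (continuous_const.prodMk continuous_id).continuousAt
  have hev4 : ∀ᶠ α : ℝ in 𝓝 0, Φ (Ψ ((0:ℝ), α)) = ((0:ℝ), α) := hcur.eventually hri
  have hevS2 : ∀ᶠ α : ℝ in 𝓝 0, Ψ ((0:ℝ), α) ∈ S := by
    have hT : ContinuousAt (fun α : ℝ => Ψ ((0:ℝ), α)) 0 := hΨct.comp hcur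
    have hT2 : Filter.Tendsto (fun α : ℝ => Ψ ((0:ℝ), α)) (𝓝 0) (𝓝 ((0:ℝ),(0:ℝ))) := by
      have := hT.tendsto; rwa [hΨ00] at this
    exact hT2.eventually (hSopen.eventually_mem hS0)
  have hδ0 : δ 0 = 0 := by
    show (Ψ ((0:ℝ),(0:ℝ))).1 = 0
    rw [hΨ00]
  have hδat : ContDiffAt ℝ (⊤ : ℕ∞) δ 0 :=
    contDiff_fst.contDiffAt.comp 0
      (hΨat.comp 0 ((contDiff_const.prodMk contDiff_id).contDiffAt))
  -- consequences of the right inverse property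
  have hpair : ∀ α : ℝ, Φ (Ψ ((0:ℝ), α)) = ((0:ℝ), α) →
      ((δ α, α) : ℝ × ℝ) = Ψ ((0:ℝ), α) ∧ F (δ α, α) = 0 := by
    intro α hα
    have h2' : (Ψ ((0:ℝ), α)).2 = α := congrArg Prod.snd hα
    have hpr : ((δ α, α) : ℝ × ℝ) = Ψ ((0:ℝ), α) :=
      Prod.ext rfl (show ((δ α, α) : ℝ × ℝ).2 = (Ψ ((0:ℝ), α)).2 from h2'.symm)
    have h1' : F (Ψ ((0:ℝ), α)) = 0 := congrArg Prod.fst hα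
    exact ⟨hpr, by rw [hpr]; exact h1'⟩
  have hFδ0 : ∀ᶠ α : ℝ in 𝓝 0, F (δ α, α) = 0 :=
    hev4.mono fun α hα => (hpair α hα).2
  -- derivative of δ at 0
  have hδdiff : DifferentiableAt ℝ δ 0 := hδat.differentiableAt (by simp)
  have hcurve2 : HasDerivAt (fun α : ℝ => ((δ α, α) : ℝ × ℝ)) ((deriv δ 0, 1) : ℝ × ℝ) 0 :=
    (hδdiff.hasDerivAt).prodMk (hasDerivAt_id 0)
  have hFd' : HasFDerivAt F (fderiv ℝ F ((0:ℝ),(0:ℝ))) ((δ 0, (0:ℝ)) : ℝ × ℝ) := by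
    rw [hδ0]; exact hFdiff.hasFDerivAt
  have hcompF : HasDerivAt (fun α : ℝ => F (δ α, α))
      (fderiv ℝ F ((0:ℝ),(0:ℝ)) ((deriv δ 0, 1) : ℝ × ℝ)) 0 :=
    HasFDerivAt.comp_hasDerivAt (f := fun α : ℝ => ((δ α, α) : ℝ × ℝ)) 0 hFd' hcurve2
  have hkey : deriv δ 0 * A + B = 0 := by
    have h0 : deriv (fun α : ℝ => F (δ α, α)) 0 = 0 := by
      have : deriv (fun α : ℝ => F (δ α, α)) 0 = deriv (fun _ : ℝ => (0:ℝ)) 0 :=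
        Filter.EventuallyEq.deriv_eq hFδ0
      rw [this, deriv_const]
    have h1' := hcompF.deriv
    rw [h0, hLdec] at h1'
    simpa using h1'.symm
  have hδ' : deriv δ 0 = -(deriv g₁ 0) / (2 * atil) := by
    rw [hg₁B]
    have hA2' : A = 2 * atil := hA2
    field_simp [← hA2']
    rw [hA2'] at hkey
    linarith [hkey]
  -- choose ε
  have hδnear : ∀ᶠ α : ℝ in 𝓝 0, ContDiffAt ℝ (⊤ : ℕ∞) δ α := by
    have hΦS : ∀ p ∈ S, ContDiffAt ℝ (⊤ : ℕ∞) Φ p := fun p hp =>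
      (hFon.contDiffAt (hSopen.mem_nhds hp)).prodMk contDiff_snd.contDiffAt
    have hfd : ContinuousAt (fderiv ℝ Φ) ((0:ℝ),(0:ℝ)) :=
      (hΦat.fderiv_right (m := 0) (by simp)).continuousAt
    have hopen : Set.range ((↑) : ((ℝ × ℝ) ≃L[ℝ] (ℝ × ℝ)) → (ℝ × ℝ) →L[ℝ] (ℝ × ℝ)) ∈
        𝓝 (fderiv ℝ Φ ((0:ℝ),(0:ℝ))) :=
      ContinuousLinearEquiv.isOpen.mem_nhds ⟨e, hΦ'.fderiv.symm⟩
    have hT2 : Filter.Tendsto (fun α : ℝ => Ψ ((0:ℝ), α)) (𝓝 0) (𝓝 ((0:ℝ),(0:ℝ))) := by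
      have hT : ContinuousAt (fun α : ℝ => Ψ ((0:ℝ), α)) 0 := hΨct.comp hcur
      have := hT.tendsto; rwa [hΨ00] at this
    have htgt : ∀ᶠ α : ℝ in 𝓝 0, ((0:ℝ), α) ∈ (hstrict.toOpenPartialHomeomorph Φ).target := by
      have hm := hstrict.image_mem_toOpenPartialHomeomorph_target
      rw [hΦ00] at hm
      exact hcur.eventually_mem (((hstrict.toOpenPartialHomeomorph Φ).open_target).mem_nhds hm)
    filter_upwards [htgt, hevS2, hT2.eventually (hfd.preimage_mem_nhds hopen)] with α hα1 hα2 hα3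
    obtain ⟨e', he'⟩ := hα3
    have hder : HasFDerivAt Φ (e' : (ℝ × ℝ) →L[ℝ] (ℝ × ℝ)) (Ψ ((0:ℝ), α)) := by
      rw [he']; exact ((hΦS _ hα2).differentiableAt (by simp)).hasFDerivAt
    have hΨα : ContDiffAt ℝ (⊤ : ℕ∞) Ψ ((0:ℝ), α) :=
      (hstrict.toOpenPartialHomeomorph Φ).contDiffAt_symm hα1 hder (hΦS _ hα2)
    exact contDiff_fst.contDiffAt.comp α
      (hΨα.comp α ((contDiff_const.prodMk contDiff_id).contDiffAt))
  obtain ⟨u, hu_nhds, hδu⟩ : ∃ u ∈ 𝓝 (0:ℝ), ContDiffOn ℝ (⊤ : ℕ∞) δ u :=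
    ⟨_, hδnear, fun α hα => ContDiffAt.contDiffWithinAt (show ContDiffAt ℝ (⊤ : ℕ∞) δ α from hα)⟩
  have hu_ev : ∀ᶠ α : ℝ in 𝓝 0, α ∈ u := hu_nhds
  have hbig := hev4.and (hevS2.and hu_ev)
  rcases Metric.eventually_nhds_iff.mp hbig with ⟨ε, hε, hball⟩
  have hIoo : ∀ α ∈ Set.Ioo (-ε) ε,
      Φ (Ψ ((0:ℝ), α)) = ((0:ℝ), α) ∧ Ψ ((0:ℝ), α) ∈ S ∧ α ∈ u := by
    intro α hα
    apply hball
    rw [Real.dist_eq, sub_zero]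
    exact abs_lt.mpr ⟨hα.1, hα.2⟩
  refine ⟨ε, hε, δ, ?_, hδ0, hδ', ?_, ?_, ?_, ?_⟩
  · -- smoothness of δ on Ioo
    exact hδu.mono fun α hα => (hIoo α hα).2.2
  · -- the linear term vanishes
    intro α hα
    obtain ⟨hαeq, hαS, -⟩ := hIoo α hα
    obtain ⟨hpr, hF0⟩ := hpair α hαeq
    have hαS' : ((δ α, α) : ℝ × ℝ) ∈ S := by rw [hpr]; exact hαS
    have hdx : HasDerivAt (fun x => gt x α) (F (δ α, α)) (δ α) := keyx (δ α, α) hαS'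
    have hdx' : HasDerivAt (fun x => gt x α) (F (δ α, α)) (0 + δ α) := by
      rwa [zero_add]
    have hshift : HasDerivAt (fun y : ℝ => y + δ α) 1 0 := (hasDerivAt_id 0).add_const (δ α)
    have hcomp : HasDerivAt (fun y : ℝ => gt (y + δ α) α) (F (δ α, α) * 1) 0 :=
      HasDerivAt.comp (h₂ := fun x => gt x α) 0 hdx' hshift
    rw [hcomp.deriv, hF0, zero_mul]
  · -- derivative of c₀ at 0
    set C : ℝ := fderiv ℝ G ((0:ℝ),(0:ℝ)) ((0:ℝ),(1:ℝ)) with hCdef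
    have hGdiff00 : DifferentiableAt ℝ G ((0:ℝ),(0:ℝ)) := hGdiff _ hS0
    have hLdecG : ∀ q : ℝ × ℝ,
        fderiv ℝ G ((0:ℝ),(0:ℝ)) q = q.1 * F ((0:ℝ),(0:ℝ)) + q.2 * C := by
      intro q
      have h : q = q.1 • ((1:ℝ),(0:ℝ)) + q.2 • ((0:ℝ),(1:ℝ)) := by simp [Prod.ext_iff]
      rw [h, map_add, map_smul, map_smul, smul_eq_mul, smul_eq_mul]
      simp [hFdef, hCdef]
    have hGd' : HasFDerivAt G (fderiv ℝ G ((0:ℝ),(0:ℝ))) ((δ 0, (0:ℝ)) : ℝ × ℝ) := by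
      rw [hδ0]; exact hGdiff00.hasFDerivAt
    have hcompG : HasDerivAt (fun α : ℝ => gt (δ α) α)
        (fderiv ℝ G ((0:ℝ),(0:ℝ)) ((deriv δ 0, 1) : ℝ × ℝ)) 0 :=
      HasFDerivAt.comp_hasDerivAt (f := fun α : ℝ => ((δ α, α) : ℝ × ℝ)) 0 hGd' hcurve2
    have hkeyy : HasDerivAt (fun α : ℝ => gt 0 α) C 0 := by
      rw [hCdef]
      have hc : HasDerivAt (fun α : ℝ => (((0:ℝ), α) : ℝ × ℝ)) (((0:ℝ),(1:ℝ)) : ℝ × ℝ) 0 :=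
        (hasDerivAt_const (0:ℝ) (0:ℝ)).prodMk (hasDerivAt_id (0:ℝ))
      exact HasFDerivAt.comp_hasDerivAt (f := fun α : ℝ => (((0:ℝ),α) : ℝ × ℝ)) 0 hGdiff00.hasFDerivAt hc
    have hg₀C : deriv g₀ 0 = C := by
      have hfun : g₀ = fun α => gt 0 α := funext fun α => hg₀ α
      rw [hfun]; exact hkeyy.deriv
    rw [hcompG.deriv, hLdecG, hF00, hg₀C]
    ring
  · -- deriv g₀ 0 ≠ 0
    have hdg2 : DifferentiableAt ℝ (fun α => g 0 α) 0 :=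
      ((hgs.differentiable (by simp)).comp
        ((differentiable_const (0:ℝ)).prodMk differentiable_id)).differentiableAt
    have hdf2 : DifferentiableAt ℝ (fun α => f 0 α) 0 :=
      ((hf.differentiable (by simp)).comp
        ((differentiable_const (0:ℝ)).prodMk differentiable_id)).differentiableAt
    have hfun : g₀ = fun α => g 0 α / f 0 α := funext fun α => by rw [hg₀, hgt]
    rw [hfun, deriv_fun_div hdg2 hdf2 hf0, hg0]
    simp only [zero_mul, sub_zero]
    exact div_ne_zero (mul_ne_zero hga hf0) (pow_ne_zero 2 hf0)
  · -- the quadratic coefficient at α = 0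
    rw [hδ0]
    simp only [add_zero]
    rw [hatil, hg₂ 0]
end
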